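/- arXiv:2509.23439 — 6 statements merged into one kernel-verified Lean document; each statement's English description precedes it below -/
import Mathlib

section
/- Let A be symmetric positive definite with simple eigenvalue λ of A·Diag(d) at d ∈ ℝ^n_{++}, with right eigenvector x. Then the gradient of d ↦ λ(A Diag(d)) is (λ / (xᵀ D x)) · (x ∘ x), where D = Diag(d) and ∘ denotes the Hadamard (entrywise) product. -/
/-!
The eigenvalue `λ` is a simple root of `χ_B`, `B = A Diag(d)`, so the implicit function theorem
applied to `(y, μ) ↦ det (μ - A Diag(y))` makes the continuous root selection `Λ` differentiable,
with derivative `B' ↦ tr (adj (λ - B) B') / tr (adj (λ - B))` by Jacobi's formula; the denominator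
is `χ_B'(λ) ≠ 0`. Since `λ - B` has one-dimensional kernel and cokernel, its adjugate is
`β x wᵀ` with `w = D x` the left eigenvector (here the symmetry of `A` enters), and the ratio
becomes `wᵀ A Diag(h) x / wᵀ x = λ ∑ xᵢ² hᵢ / xᵀ D x`.
-/

open Matrix Filter Topology
-- the sup norm, so that a matrix and its family of rows carry the same normed structure
open scoped Matrix.Norms.Elementwise

section
variable {ι R : Type*} [Fintype ι] [DecidableEq ι] [CommRing R]

theorem Matrix.det_updateRow_eq_vecMul_adjugate (M : Matrix ι ι R) (i : ι) (b : ι → R) :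
    (M.updateRow i b).det = (b ᵥ* M.adjugate) i := by
  rw [← cramer_transpose_apply, cramer_eq_adjugate_mulVec, ← adjugate_transpose, mulVec_transpose]

theorem Matrix.eval_charpoly_eq_det (M : Matrix ι ι R) (t : R) :
    M.charpoly.eval t = (t • 1 - M).det := by
  rw [eval_charpoly, scalar_apply, smul_one_eq_diagonal]

theorem Matrix.smul_eq_smul_of_adjugate_ne_zero [IsDomain R] {M : Matrix ι ι R} {i j : ι}
    (hadj : M.adjugate i j ≠ 0) {v w : ι → R} (hv : M *ᵥ v = 0) (hw : M *ᵥ w = 0) :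
    v i • w = w i • v := by
  -- `M.updateRow j (Pi.single i 1)` has determinant `M.adjugate i j`, hence is injective
  have hU : ∀ u, M *ᵥ u = 0 → M.updateRow j (Pi.single i 1) *ᵥ u = Pi.single j (u i) := by
    intro u hu
    rw [updateRow_mulVec, hu, single_dotProduct, one_mul]
    rfl
  refine sub_eq_zero.mp (eq_zero_of_mulVec_eq_zero (by rwa [← adjugate_apply]) ?_)
  rw [mulVec_sub, mulVec_smul, mulVec_smul, hU v hv, hU w hw]
  ext k
  simp only [Pi.sub_apply, Pi.smul_apply, Pi.single_apply, smul_eq_mul, Pi.zero_apply]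
  split_ifs <;> ring

end

section
variable {ι K : Type*} [Fintype ι] [DecidableEq ι] [Field K]

theorem Matrix.exists_adjugate_eq_smul_vecMulVec {M : Matrix ι ι K} {x y : ι → K}
    (hx : x ≠ 0) (hy : y ≠ 0) (hMx : M *ᵥ x = 0) (hyM : y ᵥ* M = 0) :
    ∃ β : K, M.adjugate = β • vecMulVec x y := by
  by_cases hadj : M.adjugate = 0
  · exact ⟨0, by rw [hadj, zero_smul]⟩
  obtain ⟨i₀, j₀, hij⟩ : ∃ i j, M.adjugate i j ≠ 0 := by
    by_contra! h
    exact hadj (ext h)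
  have hdet : M.det = 0 := exists_mulVec_eq_zero_iff.mp ⟨x, hx, hMx⟩
  have hcol : ∀ i j, x i₀ * M.adjugate i j = M.adjugate i₀ j * x i := by
    intro i j
    have hcol : M *ᵥ (M.adjugate *ᵥ Pi.single j 1) = 0 := by
      rw [mulVec_mulVec, mul_adjugate, hdet, zero_smul, zero_mulVec]
    simpa using congr_fun (smul_eq_smul_of_adjugate_ne_zero hij hMx hcol) i
  have hrow : ∀ i j, y j₀ * M.adjugate i j = M.adjugate i j₀ * y j := by
    intro i j
    have hij' : Mᵀ.adjugate j₀ i₀ ≠ 0 := by rwa [← adjugate_transpose]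
    have hrow : Mᵀ *ᵥ (Pi.single i 1 ᵥ* M.adjugate) = 0 := by
      rw [mulVec_transpose, vecMul_vecMul, adjugate_mul, hdet, zero_smul, vecMul_zero]
    simpa using congr_fun
      (smul_eq_smul_of_adjugate_ne_zero hij' (by rwa [mulVec_transpose]) hrow) j
  have hx₀ : x i₀ ≠ 0 := fun h0 => hx <| funext fun i => by
    simpa [h0, hij] using hcol i j₀
  have hy₀ : y j₀ ≠ 0 := fun h0 => hy <| funext fun j => by
    simpa [h0, hij] using hrow i₀ j
  refine ⟨M.adjugate i₀ j₀ / (x i₀ * y j₀), ext fun i j => ?_⟩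
  rw [smul_apply, vecMulVec_apply, smul_eq_mul, div_mul_eq_mul_div, eq_div_iff (by simp [*])]
  linear_combination (x i₀) * hrow i j + y j * hcol i j₀

theorem Matrix.trace_adjugate_mul_div_trace_adjugate {M : Matrix ι ι K} {x y : ι → K}
    (hx : x ≠ 0) (hy : y ≠ 0) (hMx : M *ᵥ x = 0) (hyM : y ᵥ* M = 0)
    (htr : M.adjugate.trace ≠ 0) (N : Matrix ι ι K) :
    (M.adjugate * N).trace / M.adjugate.trace = y ⬝ᵥ N *ᵥ x / (y ⬝ᵥ x) := by
  obtain ⟨β, hβ⟩ := exists_adjugate_eq_smul_vecMulVec hx hy hMx hyM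
  have hβ0 : β ≠ 0 := by rintro rfl; simp [hβ] at htr
  rw [hβ, smul_mul, trace_smul, trace_smul, vecMulVec_mul, trace_vecMulVec, trace_vecMulVec,
    dotProduct_comm x, dotProduct_comm x, ← dotProduct_mulVec, smul_eq_mul, smul_eq_mul,
    mul_div_mul_left _ _ hβ0]

end

section
variable {ι : Type*} [Fintype ι] [DecidableEq ι]

variable (ι) in
noncomputable def detRows :
    ContinuousMultilinearMap ℝ (fun _ : ι => ι → ℝ) ℝ where
  toMultilinearMap := (detRowAlternating : (ι → ℝ) [⋀^ι]→ₗ[ℝ] ℝ).toMultilinearMap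
  cont := continuous_id.matrix_det

noncomputable def detFDeriv (M : Matrix ι ι ℝ) : Matrix ι ι ℝ →L[ℝ] ℝ :=
  (detRows ι).linearDeriv M

theorem detFDeriv_apply (M K : Matrix ι ι ℝ) : detFDeriv M K = (M.adjugate * K).trace := by
  refine ((detRows ι).linearDeriv_apply M K).trans ?_
  rw [trace_mul_comm]
  exact Finset.sum_congr rfl fun i _ => det_updateRow_eq_vecMul_adjugate M i (K i)

theorem hasStrictFDerivAt_det (M : Matrix ι ι ℝ) : HasStrictFDerivAt det (detFDeriv M) M :=
  (detRows ι).hasStrictFDerivAt M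

theorem Matrix.eval_derivative_charpoly (B : Matrix ι ι ℝ) (t : ℝ) :
    B.charpoly.derivative.eval t = (t • 1 - B).adjugate.trace := by
  have hdet : HasDerivAt (fun s : ℝ => (s • 1 - B).det) (t • 1 - B).adjugate.trace t := by
    refine ((hasStrictFDerivAt_det (t • 1 - B)).hasFDerivAt.comp_hasDerivAt t
      (((hasDerivAt_id t).smul_const (1 : Matrix ι ι ℝ)).sub_const B)).congr_deriv ?_
    exact (detFDeriv_apply _ _).trans (by rw [one_smul, mul_one])
  simp only [← eval_charpoly_eq_det] at hdet
  exact (B.charpoly.hasDerivAt t).unique hdet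

theorem Matrix.trace_adjugate_ne_zero_of_rootMultiplicity_eq_one {B : Matrix ι ι ℝ} {t : ℝ}
    (hsimple : B.charpoly.rootMultiplicity t = 1) : (t • 1 - B).adjugate.trace ≠ 0 := by
  have hp : B.charpoly ≠ 0 := B.charpoly_monic.ne_zero
  have hroot : B.charpoly.IsRoot t := (Polynomial.rootMultiplicity_pos hp).mp (by omega)
  rw [← eval_derivative_charpoly]
  intro hderiv
  have := (Polynomial.one_lt_rootMultiplicity_iff_isRoot hp).mpr ⟨hroot, hderiv⟩
  omega

end

section
variable {𝕜 : Type*} [NontriviallyNormedField 𝕜]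
  {E₁ : Type*} [NormedAddCommGroup E₁] [NormedSpace 𝕜 E₁] [CompleteSpace E₁]
  {E₂ : Type*} [NormedAddCommGroup E₂] [NormedSpace 𝕜 E₂] [CompleteSpace E₂]
  {F : Type*} [NormedAddCommGroup F] [NormedSpace 𝕜 F] [CompleteSpace F]

theorem HasStrictFDerivAt.hasFDerivAt_of_eventually_apply_eq
    {f : E₁ × E₂ → F} {f' : E₁ × E₂ →L[𝕜] F} {u : E₁ × E₂} (hf : HasStrictFDerivAt f f' u)
    (hf₂ : (f' ∘L .inr 𝕜 E₁ E₂).IsInvertible) {g : E₁ → E₂} (hg : ContinuousAt g u.1)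
    (hgu : g u.1 = u.2) (hfg : ∀ᶠ x in 𝓝 u.1, f (x, g x) = f u) :
    HasFDerivAt g (-(f' ∘L .inr 𝕜 E₁ E₂).inverse ∘L (f' ∘L .inl 𝕜 E₁ E₂)) u.1 := by
  have hgraph : Tendsto (fun x => (x, g x)) (𝓝 u.1) (𝓝 u) := by
    simpa [hgu] using (continuousAt_id.prodMk hg).tendsto
  refine (hf.hasStrictFDerivAt_implicitFunctionOfProdDomain hf₂).hasFDerivAt.congr_of_eventuallyEq ?_
  filter_upwards [hgraph.eventually (hf.eventually_apply_eq_iff_implicitFunctionOfProdDomain hf₂),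
    hfg] with x hiff hx
  exact (hiff.mp hx).symm

theorem HasStrictFDerivAt.hasFDerivAt_of_eventually_apply_eq_of_apply_zero_one_ne_zero
    [CompleteSpace 𝕜] {f : E₁ × 𝕜 → 𝕜} {f' : E₁ × 𝕜 →L[𝕜] 𝕜} {u : E₁ × 𝕜}
    (hf : HasStrictFDerivAt f f' u) (hf₂ : f' (0, 1) ≠ 0) {g : E₁ → 𝕜} (hg : ContinuousAt g u.1)
    (hgu : g u.1 = u.2) (hfg : ∀ᶠ x in 𝓝 u.1, f (x, g x) = f u) :
    HasFDerivAt g (-(f' (0, 1))⁻¹ • (f' ∘L .inl 𝕜 E₁ 𝕜)) u.1 := by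
  set e := ContinuousLinearEquiv.unitsEquivAut 𝕜 (Units.mk0 _ hf₂)
  have he : f' ∘L .inr 𝕜 E₁ 𝕜 = e := by
    ext
    simp [e]
  have := hf.hasFDerivAt_of_eventually_apply_eq ⟨e, he.symm⟩ hg hgu hfg
  rw [he, ContinuousLinearMap.inverse_equiv] at this
  refine this.congr_fderiv ?_
  ext
  simp [e]
  ring

end

section
variable {ι : Type*} [Fintype ι] [DecidableEq ι]
  {E : Type*} [NormedAddCommGroup E] [NormedSpace ℝ E] [CompleteSpace E]

theorem HasStrictFDerivAt.hasFDerivAt_of_rootMultiplicity_charpoly_eq_one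
    {B : E → Matrix ι ι ℝ} {B' : E →L[ℝ] Matrix ι ι ℝ} {p : E} (hB : HasStrictFDerivAt B B' p)
    {t : ℝ} (hsimple : (B p).charpoly.rootMultiplicity t = 1) {Λ : E → ℝ}
    (hroot : ∀ᶠ q in 𝓝 p, (B q).charpoly.IsRoot (Λ q)) (hcont : ContinuousAt Λ p)
    (hΛp : Λ p = t) :
    HasFDerivAt Λ ((t • 1 - B p).adjugate.trace⁻¹ • (detFDeriv (t • 1 - B p)).comp B') p := by
  set M := t • 1 - B p
  have hf : HasStrictFDerivAt (fun q : E × ℝ => (q.2 • 1 - B q.1).det)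
      ((detFDeriv M).comp ((ContinuousLinearMap.snd ℝ E ℝ).smulRight 1 -
        B'.comp (.fst ℝ E ℝ))) (p, t) :=
    (hasStrictFDerivAt_det M).comp (p, t)
      ((hasStrictFDerivAt_snd.smul_const 1).sub (hB.comp (p, t) hasStrictFDerivAt_fst))
  have hfg : ∀ᶠ q in 𝓝 p, (Λ q • 1 - B q).det = M.det := by
    filter_upwards [hroot] with q hq
    rw [← eval_charpoly_eq_det, ← eval_charpoly_eq_det, hq.eq_zero, ← hΛp,
      hroot.self_of_nhds.eq_zero]
  have hc : M.adjugate.trace ≠ 0 :=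
    trace_adjugate_ne_zero_of_rootMultiplicity_eq_one hsimple
  have h1 : detFDeriv M 1 = M.adjugate.trace := (detFDeriv_apply _ _).trans (by rw [mul_one])
  refine (hf.hasFDerivAt_of_eventually_apply_eq_of_apply_zero_one_ne_zero ?_ hcont hΛp
    hfg).congr_fderiv ?_
  · simpa [h1] using hc
  · ext s
    simp [h1]

end

theorem Matrix.hasStrictFDerivAt_mul_diagonal {ι : Type*} [Fintype ι] [DecidableEq ι]
    (A : Matrix ι ι ℝ) (d : ι → ℝ) :
    HasStrictFDerivAt (fun y => A * diagonal y)
      (LinearMap.mulLeft ℝ A ∘ₗ diagonalLinearMap ι ℝ ℝ).toContinuousLinearMap d :=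
  (LinearMap.mulLeft ℝ A ∘ₗ diagonalLinearMap ι ℝ ℝ).toContinuousLinearMap.hasStrictFDerivAt

/-- Gradient of a simple eigenvalue of `A Diag(d)`.  If `λ` is a simple eigenvalue of
`A Diag(d)` at `d > 0` with right eigenvector `x`, and `Λ` is a continuous local selection
of eigenvalues of `A Diag(·)` with `Λ d = λ`, then the gradient of `Λ` at `d` is
`(λ / (xᵀ D x)) · (x ∘ x)` (stated via directional derivatives). -/
theorem grad_simple_eigenvalue (n : ℕ) (A : Matrix (Fin n) (Fin n) ℝ) (hA : A.PosDef)
    (d : Fin n → ℝ) (hd : ∀ i, 0 < d i)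
    (lam : ℝ) (x : Fin n → ℝ) (hx : x ≠ 0)
    (heig : (A * Matrix.diagonal d).mulVec x = lam • x)
    (hsimple : (A * Matrix.diagonal d).charpoly.rootMultiplicity lam = 1)
    (Λ : (Fin n → ℝ) → ℝ)
    (hΛroot : ∀ᶠ y in nhds d, (A * Matrix.diagonal y).charpoly.IsRoot (Λ y))
    (hΛcont : ContinuousAt Λ d) (hΛd : Λ d = lam) :
    ∀ h : Fin n → ℝ,
      HasDerivAt (fun t : ℝ => Λ (d + t • h))
        (∑ i, (lam / (∑ j, x j * (d j * x j)) * (x i * x i)) * h i) 0 := by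
  intro h
  set M := lam • 1 - A * diagonal d
  set w := diagonal d *ᵥ x with hw_def
  have hAT : Aᵀ = A := by simpa using hA.isHermitian.eq
  have hwA : w ᵥ* A = lam • x := by
    rw [← hAT, vecMul_transpose, hw_def, mulVec_mulVec, heig]
  have hMx : M *ᵥ x = 0 := by rw [sub_mulVec, smul_mulVec, one_mulVec, heig, sub_self]
  have hwM : w ᵥ* M = 0 := by
    rw [vecMul_sub, vecMul_smul, vecMul_one, ← vecMul_vecMul, hwA]
    ext i
    simp only [Pi.sub_apply, Pi.smul_apply, mulVec_diagonal, smul_eq_mul, vecMul_diagonal,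
      Pi.zero_apply, w]
    ring
  have hw : w ≠ 0 := fun hw0 => hx <| eq_zero_of_mulVec_eq_zero
    (by simp [det_diagonal, Finset.prod_ne_zero_iff, (hd _).ne']) hw0
  have hline : HasDerivAt (fun t : ℝ => d + t • h) h 0 := by
    simpa using ((hasDerivAt_id (0 : ℝ)).smul_const h).const_add d
  refine ((hasStrictFDerivAt_mul_diagonal A d).hasFDerivAt_of_rootMultiplicity_charpoly_eq_one
    hsimple hΛroot hΛcont hΛd |>.comp_hasDerivAt_of_eq 0 hline (by simp)).congr_deriv ?_
  show M.adjugate.trace⁻¹ * detFDeriv M (A * diagonal h) = _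
  rw [detFDeriv_apply, inv_mul_eq_div, trace_adjugate_mul_div_trace_adjugate hx hw hMx hwM
    (trace_adjugate_ne_zero_of_rootMultiplicity_eq_one hsimple), ← mulVec_mulVec,
    dotProduct_mulVec, hwA]
  have hS : w ⬝ᵥ x = ∑ j, x j * (d j * x j) := by
    simp only [hw_def, dotProduct, mulVec_diagonal, mul_comm]
  rw [hS, dotProduct, Finset.sum_div]
  refine Finset.sum_congr rfl fun i _ => ?_
  simp only [Pi.smul_apply, mulVec_diagonal, smul_eq_mul]
  ring
end

section
/- Let A be symmetric positive definite where λ_max(A) and λ_min(A) are simple eigenvalues with unit eigenvectors x₁ and x_n. Then d = e (the all-ones vector, i.e., no rescaling) is a stationary point of d ↦ κ(A Diag(d)) if and only if x₁ ∘ x₁ = x_n ∘ x_n (entrywise equality of the squares of the eigenvector entries). -/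
/-!
For a positive diagonal `D`, the matrix `A D` is similar to the symmetric matrix
`D^{1/2} A D^{1/2}`, whose Rayleigh quotient at `D^{-1/2} x` is `xᵀ A x / xᵀ D⁻¹ x`. Hence
`λ_max(A D) ≥ λ₁ / x₁ᵀ D⁻¹ x₁` and `λ_min(A D) ≤ λ_n / x_nᵀ D⁻¹ x_n`, so
`φ(d) = (λ₁ / x₁ᵀ D⁻¹ x₁) / (λ_n / x_nᵀ D⁻¹ x_n)` is a smooth lower bound for `κ(A D)` which is
attained at `d = e`. Thus `κ - φ` has a local minimum at `e`, and along every direction `h` the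
derivative of `κ` equals that of `φ`, namely `κ(A) (x₁ ∘ x₁ - x_n ∘ x_n) ⬝ h`. As `κ(A) > 0`, the
gradient vanishes exactly when `x₁ ∘ x₁ = x_n ∘ x_n`.
-/

open Filter Topology Matrix

theorem HasDerivAt.eq_of_eventuallyLE_of_eq {f φ : ℝ → ℝ} {f' φ' a : ℝ} (hf : HasDerivAt f f' a)
    (hφ : HasDerivAt φ φ' a) (hle : φ ≤ᶠ[𝓝 a] f) (heq : φ a = f a) : f' = φ' := by
  have hmin : IsLocalMin (fun t => f t - φ t) a := hle.mono fun t ht => by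
    simp only [heq, sub_self]
    linarith
  linarith [hmin.hasDerivAt_eq_zero (hf.sub hφ)]

section Weights

variable {ι : Type*} [Fintype ι] {d : ι → ℝ}

theorem eventually_one_add_smul_pos (h : ι → ℝ) : ∀ᶠ t in 𝓝 (0 : ℝ), ∀ i, 0 < (1 + t • h) i :=
  eventually_all.mpr fun i => (((continuous_const.add (continuous_id.mul continuous_const)).tendsto'
    (0 : ℝ) (1 + 0 * h i) rfl).eventually (lt_mem_nhds (by simp)))

theorem hasDerivAt_dotProduct_inv_one_add_smul (v h : ι → ℝ) :
    HasDerivAt (fun t : ℝ => v ⬝ᵥ (1 + t • h)⁻¹) (-(v ⬝ᵥ h)) 0 := by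
  have hcoord : ∀ i, HasDerivAt (fun t : ℝ => v i * (1 + t • h)⁻¹ i) (v i * -h i) 0 := fun i => by
    have := (((hasDerivAt_id (0 : ℝ)).mul_const (h i)).const_add 1).inv (by simp)
    simpa using this.const_mul (v i)
  simpa [dotProduct, Finset.sum_neg_distrib] using HasDerivAt.fun_sum fun i _ => hcoord i

theorem dotProduct_div_sqrt_self (hd : ∀ i, 0 < d i) (x : ι → ℝ) :
    (x / fun i => √(d i)) ⬝ᵥ (x / fun i => √(d i)) = (x * x) ⬝ᵥ d⁻¹ := by
  refine Finset.sum_congr rfl fun i _ => ?_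
  simp only [Pi.div_apply, Pi.mul_apply, Pi.inv_apply]
  rw [div_mul_div_comm, Real.mul_self_sqrt (hd i).le, div_eq_mul_inv]

theorem mul_self_dotProduct_inv_pos (hd : ∀ i, 0 < d i) {x : ι → ℝ} (hx : x ≠ 0) :
    0 < (x * x) ⬝ᵥ d⁻¹ := by
  obtain ⟨i, hi⟩ := Function.ne_iff.mp hx
  exact Finset.sum_pos' (fun j _ => mul_nonneg (mul_self_nonneg _) (inv_nonneg.mpr (hd j).le))
    ⟨i, Finset.mem_univ i, mul_pos (mul_self_pos.mpr hi) (inv_pos.mpr (hd i))⟩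

end Weights

namespace Matrix

variable {ι : Type*} [Fintype ι] [DecidableEq ι]

section Similarity

variable {R : Type*}

theorem spectrum_mul_diagonal_mul_self [CommRing R] (A : Matrix ι ι R) {s : ι → R}
    (hs : IsUnit s) :
    spectrum R (A * diagonal (s * s)) = spectrum R (diagonal s * A * diagonal s) := by
  set u := (isUnit_diagonal.mpr hs).unit
  have hu : (u : Matrix ι ι R) = diagonal s := rfl
  have hss : diagonal (s * s) = diagonal s * diagonal s := (diagonal_mul_diagonal s s).symm
  rw [← spectrum.units_conjugate (u := u), hss, ← hu]
  simp only [Matrix.mul_assoc, Units.mul_inv, Matrix.mul_one]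

theorem dotProduct_div_mulVec_diagonal_mul_mul_diagonal [Field R] (A : Matrix ι ι R)
    {s : ι → R} (hs : ∀ i, s i ≠ 0) (x : ι → R) :
    (x / s) ⬝ᵥ ((diagonal s * A * diagonal s) *ᵥ (x / s)) = x ⬝ᵥ (A *ᵥ x) := by
  have hx : diagonal s *ᵥ (x / s) = x := by
    ext i
    simp [mulVec_diagonal, mul_div_cancel₀ _ (hs i)]
  have hx' : (x / s) ᵥ* diagonal s = x := by
    ext i
    simp [vecMul_diagonal, div_mul_cancel₀ _ (hs i)]
  rw [← mulVec_mulVec, ← mulVec_mulVec, hx, dotProduct_mulVec, hx']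

end Similarity

section Rayleigh

open scoped MatrixOrder

variable {M : Matrix ι ι ℝ}

theorem IsHermitian.dotProduct_mulVec_le_sSup_spectrum (hM : M.IsHermitian) (x : ι → ℝ) :
    x ⬝ᵥ (M *ᵥ x) ≤ sSup (spectrum ℝ M) * (x ⬝ᵥ x) := by
  have hle : M ≤ algebraMap ℝ _ (sSup (spectrum ℝ M)) :=
    le_algebraMap_of_spectrum_le (fun r hr => le_csSup finite_real_spectrum.bddAbove hr) hM
  simpa [sub_mulVec, dotProduct_sub, Algebra.algebraMap_eq_smul_one, smul_mulVec]
    using (le_iff.mp hle).dotProduct_mulVec_nonneg x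

theorem IsHermitian.sInf_spectrum_mul_le_dotProduct_mulVec (hM : M.IsHermitian) (x : ι → ℝ) :
    sInf (spectrum ℝ M) * (x ⬝ᵥ x) ≤ x ⬝ᵥ (M *ᵥ x) := by
  have hle : algebraMap ℝ _ (sInf (spectrum ℝ M)) ≤ M :=
    algebraMap_le_of_le_spectrum (fun r hr => csInf_le finite_real_spectrum.bddBelow hr) hM
  simpa [sub_mulVec, dotProduct_sub, Algebra.algebraMap_eq_smul_one, smul_mulVec]
    using (le_iff.mp hle).dotProduct_mulVec_nonneg x

theorem PosDef.sInf_spectrum_pos [Nonempty ι] (hM : M.PosDef) : 0 < sInf (spectrum ℝ M) := by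
  obtain ⟨i, hi⟩ : sInf (spectrum ℝ M) ∈ Set.range hM.isHermitian.eigenvalues := by
    rw [← hM.isHermitian.spectrum_real_eq_range_eigenvalues]
    exact (hM.isHermitian.spectrum_real_eq_range_eigenvalues ▸ Set.range_nonempty _).csInf_mem
      finite_real_spectrum
  exact hi ▸ hM.eigenvalues_pos i

end Rayleigh

section PositiveDiagonal

variable {A : Matrix ι ι ℝ} {s d : ι → ℝ}

theorem IsHermitian.diagonal_mul_mul_diagonal (hA : A.IsHermitian) (s : ι → ℝ) :
    (diagonal s * A * diagonal s).IsHermitian := by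
  simpa using isHermitian_conjTranspose_mul_mul (diagonal s) hA

theorem PosDef.diagonal_mul_mul_diagonal (hA : A.PosDef) (hs : ∀ i, s i ≠ 0) :
    (diagonal s * A * diagonal s).PosDef := by
  have hinj : Function.Injective (diagonal s).mulVec :=
    mulVec_injective_iff_isUnit.mpr (isUnit_diagonal.mpr (Pi.isUnit_iff.mpr fun i => (hs i).isUnit))
  simpa using hA.conjTranspose_mul_mul_same hinj

theorem spectrum_mul_diagonal_eq_of_pos (A : Matrix ι ι ℝ) (hd : ∀ i, 0 < d i) :
    spectrum ℝ (A * diagonal d) =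
      spectrum ℝ (diagonal (fun i => √(d i)) * A * diagonal (fun i => √(d i))) := by
  have hsq : (fun i => √(d i)) * (fun i => √(d i)) = d :=
    funext fun i => Real.mul_self_sqrt (hd i).le
  rw [← spectrum_mul_diagonal_mul_self, hsq]
  exact Pi.isUnit_iff.mpr fun i => (Real.sqrt_pos.mpr (hd i)).ne'.isUnit

theorem IsHermitian.dotProduct_mulVec_le_sSup_spectrum_mul_diagonal (hA : A.IsHermitian)
    (hd : ∀ i, 0 < d i) (x : ι → ℝ) :
    x ⬝ᵥ (A *ᵥ x) ≤ sSup (spectrum ℝ (A * diagonal d)) * ((x * x) ⬝ᵥ d⁻¹) := by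
  rw [spectrum_mul_diagonal_eq_of_pos A hd, ← dotProduct_div_sqrt_self hd,
    ← dotProduct_div_mulVec_diagonal_mul_mul_diagonal A (fun i => (Real.sqrt_pos.mpr (hd i)).ne')]
  exact (hA.diagonal_mul_mul_diagonal _).dotProduct_mulVec_le_sSup_spectrum _

theorem IsHermitian.sInf_spectrum_mul_diagonal_mul_le_dotProduct_mulVec (hA : A.IsHermitian)
    (hd : ∀ i, 0 < d i) (x : ι → ℝ) :
    sInf (spectrum ℝ (A * diagonal d)) * ((x * x) ⬝ᵥ d⁻¹) ≤ x ⬝ᵥ (A *ᵥ x) := by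
  rw [spectrum_mul_diagonal_eq_of_pos A hd, ← dotProduct_div_sqrt_self hd,
    ← dotProduct_div_mulVec_diagonal_mul_mul_diagonal A (fun i => (Real.sqrt_pos.mpr (hd i)).ne')]
  exact (hA.diagonal_mul_mul_diagonal _).sInf_spectrum_mul_le_dotProduct_mulVec _

theorem PosDef.sInf_spectrum_mul_diagonal_pos [Nonempty ι] (hA : A.PosDef) (hd : ∀ i, 0 < d i) :
    0 < sInf (spectrum ℝ (A * diagonal d)) := by
  rw [spectrum_mul_diagonal_eq_of_pos A hd]
  exact (hA.diagonal_mul_mul_diagonal fun i => (Real.sqrt_pos.mpr (hd i)).ne').sInf_spectrum_pos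

end PositiveDiagonal

section ConditionNumber

variable {A : Matrix ι ι ℝ}

noncomputable def spectralConditionNumber (M : Matrix ι ι ℝ) : ℝ :=
  sSup (spectrum ℝ M) / sInf (spectrum ℝ M)

theorem PosDef.spectralConditionNumber_pos [Nonempty ι] (hA : A.PosDef) :
    0 < spectralConditionNumber A := by
  have hne : (spectrum ℝ A).Nonempty := by
    rw [hA.isHermitian.spectrum_real_eq_range_eigenvalues]
    exact Set.range_nonempty _
  have hinf := hA.sInf_spectrum_pos
  exact div_pos (hinf.trans_le (csInf_le_csSup hne finite_real_spectrum.bddBelow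
    finite_real_spectrum.bddAbove)) hinf

theorem PosDef.div_le_spectralConditionNumber_mul_diagonal (hA : A.PosDef) {d : ι → ℝ}
    (hd : ∀ i, 0 < d i) {x y : ι → ℝ} (hx : x ≠ 0) (hy : y ≠ 0) :
    (x ⬝ᵥ (A *ᵥ x) / (x * x) ⬝ᵥ d⁻¹) / (y ⬝ᵥ (A *ᵥ y) / (y * y) ⬝ᵥ d⁻¹) ≤
      spectralConditionNumber (A * diagonal d) := by
  have : Nonempty ι := ⟨(Function.ne_iff.mp hx).choose⟩
  have hwx := mul_self_dotProduct_inv_pos hd hx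
  have hwy := mul_self_dotProduct_inv_pos hd hy
  have hsup := (div_le_iff₀ hwx).mpr
    (hA.isHermitian.dotProduct_mulVec_le_sSup_spectrum_mul_diagonal hd x)
  have hinf := (le_div_iff₀ hwy).mpr
    (hA.isHermitian.sInf_spectrum_mul_diagonal_mul_le_dotProduct_mulVec hd y)
  have hnum : 0 ≤ x ⬝ᵥ (A *ᵥ x) / (x * x) ⬝ᵥ d⁻¹ :=
    div_nonneg (by simpa using hA.posSemidef.dotProduct_mulVec_nonneg x) hwx.le
  exact div_le_div₀ (hnum.trans hsup) hsup (hA.sInf_spectrum_mul_diagonal_pos hd) hinf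

theorem PosDef.eq_of_hasDerivAt_spectralConditionNumber (hA : A.PosDef) {x y : ι → ℝ}
    (hx : x ⬝ᵥ x = 1) (hy : y ⬝ᵥ y = 1) (hxA : x ⬝ᵥ (A *ᵥ x) = sSup (spectrum ℝ A))
    (hyA : y ⬝ᵥ (A *ᵥ y) = sInf (spectrum ℝ A)) {h : ι → ℝ} {κ' : ℝ}
    (hκ : HasDerivAt (fun t : ℝ => spectralConditionNumber (A * diagonal (1 + t • h))) κ' 0) :
    κ' = spectralConditionNumber A * ((x * x - y * y) ⬝ᵥ h) := by
  have hx0 : x ≠ 0 := fun h0 => by simp [h0] at hx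
  have hy0 : y ≠ 0 := fun h0 => by simp [h0] at hy
  have : Nonempty ι := ⟨(Function.ne_iff.mp hx0).choose⟩
  have hw0 : ∀ v : ι → ℝ, (v * v) ⬝ᵥ 1 = v ⬝ᵥ v := fun v => by simp [dotProduct]
  set φ : ℝ → ℝ := fun t =>
    (x ⬝ᵥ (A *ᵥ x) / (x * x) ⬝ᵥ (1 + t • h)⁻¹) / (y ⬝ᵥ (A *ᵥ y) / (y * y) ⬝ᵥ (1 + t • h)⁻¹)
  have hle : φ ≤ᶠ[𝓝 0] fun t => spectralConditionNumber (A * diagonal (1 + t • h)) :=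
    (eventually_one_add_smul_pos h).mono fun t ht =>
      hA.div_le_spectralConditionNumber_mul_diagonal ht hx0 hy0
  have heq : φ 0 = spectralConditionNumber (A * diagonal (1 + (0 : ℝ) • h)) := by
    simp [φ, hw0, hx, hy, hxA, hyA, spectralConditionNumber]
  have hb : sInf (spectrum ℝ A) ≠ 0 := hA.sInf_spectrum_pos.ne'
  have hφ : HasDerivAt φ (spectralConditionNumber A * ((x * x - y * y) ⬝ᵥ h)) 0 := by
    have hx' := (hasDerivAt_const (0 : ℝ) (x ⬝ᵥ (A *ᵥ x))).div
      (hasDerivAt_dotProduct_inv_one_add_smul (x * x) h) (by simp [hw0, hx])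
    have hy' := (hasDerivAt_const (0 : ℝ) (y ⬝ᵥ (A *ᵥ y))).div
      (hasDerivAt_dotProduct_inv_one_add_smul (y * y) h) (by simp [hw0, hy])
    refine (hx'.div hy' (by simp [hw0, hy, hyA, hb])).congr_deriv ?_
    simp only [zero_smul, add_zero, inv_one, hw0, hx, hy, hxA, hyA, mul_one, mul_neg,
      sub_neg_eq_add, zero_add, one_pow, div_one, Pi.div_apply, spectralConditionNumber,
      sub_dotProduct]
    field_simp
  exact hκ.eq_of_eventuallyLE_of_eq hφ hle heq

end ConditionNumber

end Matrix

theorem kappa_stationary_iff_squares_eq_general (n : ℕ)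
    (A : Matrix (Fin n) (Fin n) ℝ) (hA : A.PosDef)
    (lam1 lamn : ℝ) (x1 xn : Fin n → ℝ)
    (hlam1 : lam1 = sSup (spectrum ℝ A)) (hlamn : lamn = sInf (spectrum ℝ A))
    (hx1unit : ∑ i, x1 i * x1 i = 1) (hxnunit : ∑ i, xn i * xn i = 1)
    (heig1 : A.mulVec x1 = lam1 • x1) (heign : A.mulVec xn = lamn • xn)
    (g : Fin n → ℝ)
    (hg : ∀ h : Fin n → ℝ,
      HasDerivAt
        (fun t : ℝ =>
          sSup (spectrum ℝ (A * Matrix.diagonal ((fun _ => (1 : ℝ)) + t • h))) /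
          sInf (spectrum ℝ (A * Matrix.diagonal ((fun _ => (1 : ℝ)) + t • h))))
        (∑ i, g i * h i) 0) :
    g = 0 ↔ (fun i => x1 i * x1 i) = (fun i => xn i * xn i) := by
  have hx1A : x1 ⬝ᵥ (A *ᵥ x1) = sSup (spectrum ℝ A) := by
    rw [heig1, dotProduct_smul, smul_eq_mul, ← hlam1, show x1 ⬝ᵥ x1 = 1 from hx1unit, mul_one]
  have hxnA : xn ⬝ᵥ (A *ᵥ xn) = sInf (spectrum ℝ A) := by
    rw [heign, dotProduct_smul, smul_eq_mul, ← hlamn, show xn ⬝ᵥ xn = 1 from hxnunit, mul_one]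
  have hgrad : g = spectralConditionNumber A • (x1 * x1 - xn * xn) :=
    dotProduct_eq _ _ fun h => by
      rw [smul_dotProduct, smul_eq_mul]
      exact hA.eq_of_hasDerivAt_spectralConditionNumber hx1unit hxnunit hx1A hxnA (hg h)
  have : Nonempty (Fin n) :=
    Finset.univ_nonempty_iff.mp (Finset.nonempty_of_sum_ne_zero (hx1unit ▸ one_ne_zero))
  rw [hgrad, smul_eq_zero_iff_right hA.spectralConditionNumber_pos.ne', sub_eq_zero]
  rfl

/-- Let `A ≻ 0` with simple largest and smallest eigenvalues `λ₁ = λ_max(A)`,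
`λ_n = λ_min(A)` and unit eigenvectors `x₁, x_n`.  If the function
`κ(d) = λ_max(A Diag d)/λ_min(A Diag d)` has gradient `g` at `d = e` (the all-ones
vector, expressed via directional derivatives), then `d = e` is a stationary point
(`g = 0`) if and only if `x₁ ∘ x₁ = x_n ∘ x_n`. -/
theorem kappa_stationary_iff_squares_eq (n : ℕ)
    (A : Matrix (Fin n) (Fin n) ℝ) (hA : A.PosDef)
    (lam1 lamn : ℝ) (x1 xn : Fin n → ℝ)
    (hlam1 : lam1 = sSup (spectrum ℝ A)) (hlamn : lamn = sInf (spectrum ℝ A))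
    (hx1unit : ∑ i, x1 i * x1 i = 1) (hxnunit : ∑ i, xn i * xn i = 1)
    (heig1 : A.mulVec x1 = lam1 • x1) (heign : A.mulVec xn = lamn • xn)
    (hsimple1 : A.charpoly.rootMultiplicity lam1 = 1)
    (hsimplen : A.charpoly.rootMultiplicity lamn = 1)
    (g : Fin n → ℝ)
    (hg : ∀ h : Fin n → ℝ,
      HasDerivAt
        (fun t : ℝ =>
          sSup (spectrum ℝ (A * Matrix.diagonal ((fun _ => (1 : ℝ)) + t • h))) /
          sInf (spectrum ℝ (A * Matrix.diagonal ((fun _ => (1 : ℝ)) + t • h))))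
        (∑ i, g i * h i) 0) :
    g = 0 ↔ (fun i => x1 i * x1 i) = (fun i => xn i * xn i) :=
  kappa_stationary_iff_squares_eq_general n A hA lam1 lamn x1 xn hlam1 hlamn hx1unit hxnunit heig1
    heign g hg
end

section
/- Let f(x) = a(x)/b(x) on a set X (and f = ∞ off X), where a is convex and positive on X and b is concave and positive on X. Fix x ∈ X with B = 1/b(x) and A = a(x)/b(x)². Then every g ∈ B·∂a(x) + A·∂(−b)(x) is a quasisubgradient of f at x, i.e., ⟨g, y − x⟩ < 0 for every y in the interior of the domain of f with f(y) < f(x). -/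
/-- Quasisubgradients of the fractional function `f = a/b`.  Let `a` be convex and
positive on `X`, `b` concave and positive on `X`, `x ∈ X`, `B = 1/b(x)`,
`A = a(x)/b(x)²`.  If `u ∈ ∂a(x)` and `v ∈ ∂(−b)(x)` (Fenchel subdifferentials over `X`),
then `g = B·u + A·v` satisfies `⟨g, y − x⟩ < 0` for every `y ∈ int X` with
`a(y)/b(y) < a(x)/b(x)`; that is, `g` is a quasisubgradient of `f` at `x`. -/
theorem fractional_quasisubgradient (m : ℕ) (X : Set (Fin m → ℝ))
    (a b : (Fin m → ℝ) → ℝ)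
    (ha : ConvexOn ℝ X a) (hb : ConcaveOn ℝ X b)
    (hapos : ∀ z ∈ X, 0 < a z) (hbpos : ∀ z ∈ X, 0 < b z)
    (x : Fin m → ℝ) (hx : x ∈ X)
    (u v : Fin m → ℝ)
    (hu : ∀ y ∈ X, ∑ i, u i * (y i - x i) ≤ a y - a x)
    (hv : ∀ y ∈ X, ∑ i, v i * (y i - x i) ≤ (-b) y - (-b) x) :
    ∀ y ∈ interior X, a y / b y < a x / b x →
      ∑ i, ((1 / b x) * u i + (a x / (b x) ^ 2) * v i) * (y i - x i) < 0 := by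
  intro y hyi hlt
  have hy : y ∈ X := interior_subset hyi
  have hbx := hbpos x hx
  have hby := hbpos y hy
  have hax := hapos x hx
  have hSu := hu y hy
  have hSv := hv y hy
  simp only [Pi.neg_apply] at hSv
  have key : a y * b x < a x * b y := by
    have := (div_lt_div_iff₀ hby hbx).mp hlt
    linarith
  have hsum : ∑ i, ((1 / b x) * u i + (a x / (b x) ^ 2) * v i) * (y i - x i)
      = (1 / b x) * ∑ i, u i * (y i - x i)
        + (a x / (b x) ^ 2) * ∑ i, v i * (y i - x i) := by
    rw [Finset.mul_sum, Finset.mul_sum, ← Finset.sum_add_distrib]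
    congr 1; ext i; ring
  rw [hsum]
  have h1 : (0:ℝ) < 1 / b x := by positivity
  have h2 : (0:ℝ) < a x / (b x) ^ 2 := by positivity
  have b1 : (1 / b x) * ∑ i, u i * (y i - x i) ≤ (1 / b x) * (a y - a x) :=
    mul_le_mul_of_nonneg_left hSu h1.le
  have b2 : (a x / (b x) ^ 2) * ∑ i, v i * (y i - x i)
      ≤ (a x / (b x) ^ 2) * (-b y + b x) :=
    mul_le_mul_of_nonneg_left (by linarith) h2.le
  have hfinal : (1 / b x) * (a y - a x) + (a x / (b x) ^ 2) * (-b y + b x) < 0 := by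
    have : (1 / b x) * (a y - a x) + (a x / (b x) ^ 2) * (-b y + b x)
        = (a y * b x - a x * b y) / (b x) ^ 2 := by
      field_simp; ring
    rw [this]
    apply div_neg_of_neg_of_pos (by linarith) (by positivity)
  linarith
end

section
/- For A symmetric positive definite, the function d ↦ trace(A Diag(d)) / (∏ᵢ dᵢ)^{1/n} on ℝ^n_{++} is stationary at d* with d*ᵢ = 1/Aᵢᵢ (the Jacobi scaling), and any positive multiple of d* is also stationary; equivalently ω(Diag(d)^{1/2} A Diag(d)^{1/2}) is minimized over d > 0 at d* = 1./diag(A). -/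
/-!
Since `trace (A * diagonal d) = ∑ᵢ Aᵢᵢ dᵢ` and `det (A * diagonal d) = det A * ∏ᵢ dᵢ`,
`ω(A Diag d) = (∏ᵢ Aᵢᵢ / det A)^{1/n} · AM / GM`, where AM and GM are the arithmetic and
geometric means of the numbers `Aᵢᵢ dᵢ`. By AM–GM the minimum `(∏ᵢ Aᵢᵢ / det A)^{1/n}` is
attained when all `Aᵢᵢ dᵢ` are equal, e.g. at `dᵢ = 1/Aᵢᵢ`. Stationarity at `x = c • d*` is the
same balance seen infinitesimally: when `Aᵢᵢ xᵢ = c` for all `i`, the logarithmic derivatives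
of `∑ᵢ Aᵢᵢ xᵢ` and of `(∏ᵢ xᵢ)^{1/n}` along any direction `h` are both `(1/n) ∑ᵢ hᵢ / xᵢ`.
-/

open Matrix Finset

namespace Matrix

variable {ι : Type*} [Fintype ι] [DecidableEq ι]

lemma trace_mul_diagonal (A : Matrix ι ι ℝ) (d : ι → ℝ) :
    (A * diagonal d).trace = ∑ i, A i i * d i := by
  simp [trace, mul_diagonal]

end Matrix

theorem Real.prod_rpow_inv_card_le_sum_div_card {ι : Type*} [Fintype ι] [Nonempty ι]
    (z : ι → ℝ) (hz : ∀ i, 0 ≤ z i) :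
    (∏ i, z i) ^ ((1 : ℝ) / Fintype.card ι) ≤ (∑ i, z i) / Fintype.card ι := by
  simpa [one_div] using
    Real.geom_mean_le_arith_mean univ (fun _ => 1) z (fun _ _ => zero_le_one)
      (by simp [Fintype.card_pos]) (fun i _ => hz i)

section Stationarity

variable {ι : Type*} [Fintype ι]

lemma hasDerivAt_sum_mul_add_mul (w x h : ι → ℝ) :
    HasDerivAt (fun t : ℝ => ∑ i, w i * (x i + t * h i)) (∑ i, w i * h i) 0 := by
  have hline : ∀ i ∈ univ, HasDerivAt (fun t : ℝ => w i * (x i + t * h i)) (w i * h i) 0 :=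
    fun i _ => by
      simpa using (((hasDerivAt_id (0 : ℝ)).mul_const (h i)).const_add (x i)).const_mul (w i)
  simpa using HasDerivAt.fun_sum hline

variable [DecidableEq ι]

lemma hasDerivAt_prod_add_mul (x h : ι → ℝ) :
    HasDerivAt (fun t : ℝ => ∏ i, (x i + t * h i))
      (∑ i, (∏ j ∈ univ.erase i, x j) * h i) 0 := by
  have hline : ∀ i ∈ univ, HasDerivAt (fun t : ℝ => x i + t * h i) (h i) 0 := fun i _ => by
    simpa using ((hasDerivAt_id (0 : ℝ)).mul_const (h i)).const_add (x i)
  simpa using HasDerivAt.fun_finsetProd hline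

lemma mul_sum_prod_erase_mul_of_mul_eq {w x : ι → ℝ} {c : ℝ} (hwx : ∀ i, w i * x i = c)
    (h : ι → ℝ) :
    c * ∑ i, (∏ j ∈ univ.erase i, x j) * h i = (∏ i, x i) * ∑ i, w i * h i := by
  rw [mul_sum, mul_sum]
  refine sum_congr rfl fun i _ => ?_
  rw [← hwx i, ← prod_erase_mul univ x (mem_univ i)]
  ring

theorem hasDerivAt_sum_mul_div_prod_rpow_of_mul_eq [Nonempty ι] {w x : ι → ℝ} {c : ℝ}
    (hx : ∀ i, 0 < x i) (hwx : ∀ i, w i * x i = c) (h : ι → ℝ) :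
    HasDerivAt (fun t : ℝ => (∑ i, w i * (x i + t * h i)) /
      (∏ i, (x i + t * h i)) ^ ((1 : ℝ) / Fintype.card ι)) 0 0 := by
  set n : ℝ := (Fintype.card ι : ℝ)
  have hn : n ≠ 0 := Nat.cast_ne_zero.mpr Fintype.card_ne_zero
  have hP : 0 < ∏ i, x i := prod_pos fun i _ => hx i
  have hPn : (∏ i, x i) ^ ((1 : ℝ) / n) ≠ 0 := (Real.rpow_pos_of_pos hP _).ne'
  have hsum : ∑ i, w i * x i = n * c := by simp [hwx, n]
  have hquot := (hasDerivAt_sum_mul_add_mul w x h).div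
    ((hasDerivAt_prod_add_mul x h).rpow_const (p := 1 / n) (Or.inl (by simpa using hP.ne')))
    (by simpa using hPn)
  simp only [zero_mul, add_zero] at hquot
  refine hquot.congr_deriv ?_
  rw [div_eq_zero_iff, hsum, Real.rpow_sub_one hP.ne', sub_eq_zero]
  left
  field_simp
  rw [mul_sum_prod_erase_mul_of_mul_eq hwx h]
  ring

end Stationarity

namespace Matrix

variable {ι : Type*} [Fintype ι] [DecidableEq ι]

/-- The paper's `ω(B) = (trace B / n) / (det B)^{1/n}`. -/
noncomputable def omegaCond (B : Matrix ι ι ℝ) : ℝ :=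
  (B.trace / Fintype.card ι) / B.det ^ ((1 : ℝ) / Fintype.card ι)

lemma omegaCond_mul_diagonal (A : Matrix ι ι ℝ) (d : ι → ℝ) :
    omegaCond (A * diagonal d) = ((∑ i, A i i * d i) / Fintype.card ι) /
      (A.det * ∏ i, d i) ^ ((1 : ℝ) / Fintype.card ι) := by
  rw [omegaCond, trace_mul_diagonal, det_mul, det_diagonal]

variable [Nonempty ι] {A : Matrix ι ι ℝ}

theorem rpow_prod_diag_div_det_le_omegaCond_mul_diagonal (hdet : 0 < A.det)
    (hdiag : ∀ i, 0 ≤ A i i) {d : ι → ℝ} (hd : ∀ i, 0 < d i) :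
    ((∏ i, A i i) / A.det) ^ ((1 : ℝ) / Fintype.card ι) ≤ omegaCond (A * diagonal d) := by
  have hprod : 0 < ∏ i, d i := prod_pos fun i _ => hd i
  have hratio : (∏ i, A i i) / A.det = (∏ i, A i i * d i) / (A.det * ∏ i, d i) := by
    rw [prod_mul_distrib, mul_div_mul_right _ _ hprod.ne']
  rw [omegaCond_mul_diagonal, hratio,
    Real.div_rpow (prod_nonneg fun i _ => mul_nonneg (hdiag i) (hd i).le)
      (mul_pos hdet hprod).le]
  gcongr
  exact Real.prod_rpow_inv_card_le_sum_div_card _ fun i => mul_nonneg (hdiag i) (hd i).le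

theorem omegaCond_mul_diagonal_inv_diag (hdet : 0 < A.det) (hdiag : ∀ i, 0 < A i i) :
    omegaCond (A * diagonal fun i => 1 / A i i) =
      ((∏ i, A i i) / A.det) ^ ((1 : ℝ) / Fintype.card ι) := by
  have hcard : (Fintype.card ι : ℝ) ≠ 0 := Nat.cast_ne_zero.mpr Fintype.card_ne_zero
  have hprod : 0 < ∏ i, A i i := prod_pos fun i _ => hdiag i
  have hsum : ∑ i, A i i * (1 / A i i) = Fintype.card ι := by
    rw [sum_congr rfl fun i _ => mul_one_div_cancel (hdiag i).ne']
    simp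
  rw [omegaCond_mul_diagonal, hsum, div_self hcard, prod_div_distrib, prod_const_one,
    mul_one_div, one_div, ← Real.inv_rpow (div_pos hdet hprod).le, inv_div]

end Matrix

/-- Jacobi scaling is `ω`-optimal: for `A ≻ 0`, the function
`d ↦ trace(A Diag d)/(∏ᵢ dᵢ)^{1/n}` on `ℝ^n_{++}` is stationary at `d* = 1./diag(A)`
(i.e. `d*ᵢ = 1/Aᵢᵢ`) and at every positive multiple `c·d*` (stated via directional
derivatives), and `d*` minimizes `ω(A Diag d) = (trace(A Diag d)/n)/det(A Diag d)^{1/n}`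
over all `d > 0`. -/
theorem jacobi_scaling_omega_optimal (n : ℕ) (hn : 0 < n)
    (A : Matrix (Fin n) (Fin n) ℝ) (hA : A.PosDef) :
    let dstar : Fin n → ℝ := fun i => 1 / A i i
    let f : (Fin n → ℝ) → ℝ :=
      fun d => (A * Matrix.diagonal d).trace / (∏ i, d i) ^ ((1 : ℝ) / n)
    let omega : Matrix (Fin n) (Fin n) ℝ → ℝ :=
      fun B => (B.trace / n) / B.det ^ ((1 : ℝ) / n)
    (∀ c : ℝ, 0 < c → ∀ h : Fin n → ℝ,
        HasDerivAt (fun t : ℝ => f (c • dstar + t • h)) 0 0) ∧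
      ∀ d : Fin n → ℝ, (∀ i, 0 < d i) →
        omega (A * Matrix.diagonal dstar) ≤ omega (A * Matrix.diagonal d) := by
  intro dstar f omega
  have : Nonempty (Fin n) := ⟨⟨0, hn⟩⟩
  have hdiag : ∀ i, 0 < A i i := fun i => hA.diag_pos
  have hdet : 0 < A.det := hA.det_pos
  refine ⟨fun c hc h => ?_, fun d hd => ?_⟩
  · have hx : ∀ i, 0 < c * dstar i := fun i => mul_pos hc (one_div_pos.mpr (hdiag i))
    have hwx : ∀ i, A i i * (c * dstar i) = c := fun i => by
      simp only [dstar]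
      field_simp [(hdiag i).ne']
    simpa [f, trace_mul_diagonal] using hasDerivAt_sum_mul_div_prod_rpow_of_mul_eq hx hwx h
  · have homega : ∀ B, omega B = omegaCond B := fun B => by simp [omega, omegaCond]
    rw [homega, homega, omegaCond_mul_diagonal_inv_diag hdet hdiag]
    exact rpow_prod_diag_div_det_le_omegaCond_mul_diagonal hdet (fun i => (hdiag i).le) hd
end

section
/- Let M = [M₁ … M_k] be a full-rank m×n real matrix (n ≤ m) with blocks Mᵢ ∈ ℝ^{m×nᵢ} each of full column rank nᵢ, ∑ nᵢ = n. Then the block diagonal matrix B = blkdiag(B₁, …, B_k) with Bᵢ = (MᵢᵀMᵢ)^{-1/2} minimizes ω((MB)ᵀ(MB)) over all block diagonal B with blocks of sizes nᵢ. -/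
/-!
Write `C = B D` with `D` block diagonal and put `G = (MB)ᵀ(MB)`, so that `(MC)ᵀ(MC) = DᵀGD`.
The diagonal blocks of `G` are identities, hence `tr (DᵀGD) = tr (DᵀD)` and `tr G = n`; together
with `det (DᵀGD) = det G · det (DᵀD)` this gives `ω(DᵀGD) = ω(G) · ω(DᵀD)`, and `ω(DᵀD) ≥ 1` is
AM–GM for the eigenvalues of `DᵀD`.
-/

open Matrix

namespace Matrix

section Omega

variable {n : Type*} [Fintype n] [DecidableEq n]

/-- For singular `S` this is `0` (division by zero) rather than `+∞`. -/
noncomputable def omegaCondNumber (S : Matrix n n ℝ) : ℝ :=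
  (S.trace / Fintype.card n) / S.det ^ ((1 : ℝ) / Fintype.card n)

theorem PosSemidef.det_rpow_le_trace_div_card [Nonempty n] {S : Matrix n n ℝ}
    (hS : S.PosSemidef) :
    S.det ^ ((1 : ℝ) / Fintype.card n) ≤ S.trace / Fintype.card n := by
  have amgm := Real.geom_mean_le_arith_mean Finset.univ (fun _ ↦ 1) hS.1.eigenvalues
    (fun _ _ ↦ zero_le_one) (by simp [Fintype.card_pos]) (fun i _ ↦ hS.eigenvalues_nonneg i)
  simpa [one_div, hS.1.det_eq_prod_eigenvalues, hS.1.trace_eq_sum_eigenvalues] using amgm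

theorem omegaCondNumber_nonneg {S : Matrix n n ℝ} (hS : S.PosSemidef) : 0 ≤ omegaCondNumber S :=
  div_nonneg (div_nonneg hS.trace_nonneg (Nat.cast_nonneg _)) (Real.rpow_nonneg hS.det_nonneg _)

theorem one_le_omegaCondNumber [Nonempty n] {S : Matrix n n ℝ} (hS : S.PosDef) :
    1 ≤ omegaCondNumber S :=
  (one_le_div (Real.rpow_pos_of_pos hS.det_pos _)).mpr hS.posSemidef.det_rpow_le_trace_div_card

end Omega

section Sigma

variable {o : Type*} {d : o → Type*}

theorem submatrix_sigmaMk_transpose_mul_self {R l : Type*} [Fintype l] [CommSemiring R]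
    (A : Matrix l (Σ i, d i) R) (i : o) :
    (Aᵀ * A).submatrix (Sigma.mk i) (Sigma.mk i) =
      (A.submatrix id (Sigma.mk i))ᵀ * A.submatrix id (Sigma.mk i) := by
  rw [submatrix_mul _ _ _ id _ Function.bijective_id, transpose_submatrix]

variable [Fintype o] [∀ i, Fintype (d i)]

theorem trace_eq_sum_trace_submatrix_sigmaMk {R : Type*} [AddCommMonoid R]
    (A : Matrix (Σ i, d i) (Σ i, d i) R) :
    A.trace = ∑ i, (A.submatrix (Sigma.mk i) (Sigma.mk i)).trace := by
  simp only [trace, Fintype.sum_sigma, diag_apply, submatrix_apply]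

variable [DecidableEq o]

theorem submatrix_mul_blockDiagonal'_sigmaMk {R l l' : Type*} [Semiring R]
    (A : Matrix l (Σ i, d i) R) (F : ∀ i, Matrix (d i) (d i) R) (r : l' → l) (i : o) :
    (A * blockDiagonal' F).submatrix r (Sigma.mk i) = A.submatrix r (Sigma.mk i) * F i := by
  ext a b
  simp only [submatrix_apply, mul_apply, Fintype.sum_sigma]
  rw [Fintype.sum_eq_single i fun j hj ↦ by simp [blockDiagonal'_apply_ne F _ _ hj]]
  simp [blockDiagonal'_apply_eq]

variable [∀ i, DecidableEq (d i)]

theorem trace_mul_blockDiagonal'_of_submatrix_sigmaMk_eq_one {R : Type*} [Semiring R]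
    {G : Matrix (Σ i, d i) (Σ i, d i) R} (hG : ∀ i, G.submatrix (Sigma.mk i) (Sigma.mk i) = 1)
    (F : ∀ i, Matrix (d i) (d i) R) :
    (G * blockDiagonal' F).trace = (blockDiagonal' F).trace := by
  simp only [trace_eq_sum_trace_submatrix_sigmaMk (G * _), submatrix_mul_blockDiagonal'_sigmaMk,
    hG, one_mul, trace_blockDiagonal']

theorem isUnit_det_blockDiagonal' {K : Type*} [Field K] {D : ∀ i, Matrix (d i) (d i) K}
    (hD : ∀ i, IsUnit (D i).det) : IsUnit (blockDiagonal' D).det := by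
  refine isUnit_det_of_right_inverse (B := blockDiagonal' fun i ↦ (D i)⁻¹) ?_
  simp only [← blockDiagonal'_mul, mul_nonsing_inv _ (hD _)]
  exact blockDiagonal'_one

theorem omegaCondNumber_transpose_mul_mul_blockDiagonal' [Nonempty (Σ i, d i)]
    {G : Matrix (Σ i, d i) (Σ i, d i) ℝ} (hG : G.PosSemidef)
    (hblocks : ∀ i, G.submatrix (Sigma.mk i) (Sigma.mk i) = 1) (D : ∀ i, Matrix (d i) (d i) ℝ) :
    omegaCondNumber ((blockDiagonal' D)ᵀ * G * blockDiagonal' D) =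
      omegaCondNumber G * omegaCondNumber ((blockDiagonal' D)ᵀ * blockDiagonal' D) := by
  set X := blockDiagonal' D
  have htrace_G : G.trace = Fintype.card (Σ i, d i) := by
    have h := trace_mul_blockDiagonal'_of_submatrix_sigmaMk_eq_one hblocks 1
    rwa [blockDiagonal'_one, mul_one, trace_one] at h
  have htrace : (Xᵀ * G * X).trace = (Xᵀ * X).trace := by
    rw [trace_mul_cycle, trace_mul_comm, blockDiagonal'_transpose, ← blockDiagonal'_mul,
      trace_mul_blockDiagonal'_of_submatrix_sigmaMk_eq_one hblocks, blockDiagonal'_mul,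
      ← blockDiagonal'_transpose, trace_mul_comm]
  have hdet_X : 0 ≤ (Xᵀ * X).det := by
    rw [det_mul, det_transpose]
    exact mul_self_nonneg _
  have hdet : (Xᵀ * G * X).det = G.det * (Xᵀ * X).det := by
    simp only [det_mul]
    ring
  rw [omegaCondNumber, omegaCondNumber, omegaCondNumber, htrace, hdet,
    Real.mul_rpow hG.det_nonneg hdet_X, htrace_G,
    div_self (Nat.cast_ne_zero.mpr Fintype.card_ne_zero), ← mul_div_mul_comm, one_mul]

theorem omegaCondNumber_le_transpose_mul_mul_blockDiagonal'
    {G : Matrix (Σ i, d i) (Σ i, d i) ℝ} (hG : G.PosSemidef)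
    (hblocks : ∀ i, G.submatrix (Sigma.mk i) (Sigma.mk i) = 1) {D : ∀ i, Matrix (d i) (d i) ℝ}
    (hD : ∀ i, IsUnit (D i).det) :
    omegaCondNumber G ≤ omegaCondNumber ((blockDiagonal' D)ᵀ * G * blockDiagonal' D) := by
  rcases isEmpty_or_nonempty (Σ i, d i) with _ | _
  · simp [omegaCondNumber, trace_eq_zero_of_isEmpty]
  rw [omegaCondNumber_transpose_mul_mul_blockDiagonal' hG hblocks]
  refine le_mul_of_one_le_right (omegaCondNumber_nonneg hG) (one_le_omegaCondNumber ?_)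
  rw [← conjTranspose_eq_transpose_of_trivial]
  exact PosDef.conjTranspose_mul_self _ <| mulVec_injective_iff_isUnit.mpr <|
    (isUnit_iff_isUnit_det _).mpr (isUnit_det_blockDiagonal' hD)

end Sigma

end Matrix

theorem omega_optimal_block_diagonal_scaling_general (k m : ℕ) (sz : Fin k → ℕ)
    (M : Matrix (Fin m) ((i : Fin k) × Fin (sz i)) ℝ)
    (B : ∀ i : Fin k, Matrix (Fin (sz i)) (Fin (sz i)) ℝ)
    (hB : ∀ i, (B i).PosDef ∧
      B i * ((Matrix.of fun r c => M r ⟨i, c⟩)ᵀ * (Matrix.of fun r c => M r ⟨i, c⟩)) *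
        B i = 1) :
    let N : ℕ := Fintype.card ((i : Fin k) × Fin (sz i))
    let omega : Matrix ((i : Fin k) × Fin (sz i)) ((i : Fin k) × Fin (sz i)) ℝ → ℝ :=
      fun S => (S.trace / N) / S.det ^ ((1 : ℝ) / N)
    ∀ C : ∀ i : Fin k, Matrix (Fin (sz i)) (Fin (sz i)) ℝ,
      (∀ i, IsUnit (C i).det) →
      omega ((M * Matrix.blockDiagonal' B)ᵀ * (M * Matrix.blockDiagonal' B)) ≤
        omega ((M * Matrix.blockDiagonal' C)ᵀ * (M * Matrix.blockDiagonal' C)) := by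
  intro N omega C hC
  set P := M * blockDiagonal' B
  have hB_unit (i : Fin k) : IsUnit (B i).det := (hB i).1.det_pos.ne'.isUnit
  have hblocks (i : Fin k) : (Pᵀ * P).submatrix (Sigma.mk i) (Sigma.mk i) = 1 := by
    rw [submatrix_sigmaMk_transpose_mul_self, submatrix_mul_blockDiagonal'_sigmaMk, transpose_mul,
      ← conjTranspose_eq_transpose_of_trivial (B i), (hB i).1.isHermitian.eq, ← (hB i).2]
    simp only [Matrix.mul_assoc]
    rfl
  set X := blockDiagonal' fun i ↦ (B i)⁻¹ * C i
  have hC_eq : (M * blockDiagonal' C)ᵀ * (M * blockDiagonal' C) = Xᵀ * (Pᵀ * P) * X := by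
    have hMC : M * blockDiagonal' C = P * X := by
      simp only [P, X, Matrix.mul_assoc, ← blockDiagonal'_mul,
        mul_nonsing_inv_cancel_left _ _ (hB_unit _)]
    simp only [hMC, transpose_mul, Matrix.mul_assoc]
  have hPtP : (Pᵀ * P).PosSemidef := by
    simpa only [conjTranspose_eq_transpose_of_trivial] using posSemidef_conjTranspose_mul_self P
  show omegaCondNumber (Pᵀ * P) ≤ omegaCondNumber _
  rw [hC_eq]
  exact omegaCondNumber_le_transpose_mul_mul_blockDiagonal' hPtP hblocks fun i ↦ by
    simpa only [det_mul] using (isUnit_nonsing_inv_det _ (hB_unit i)).mul (hC i)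

/-- `ω`-optimal block diagonal column scaling.  Let `M = [M₁ … M_k]` be a full-rank
`m × n` real matrix (`n ≤ m`) with blocks `Mᵢ` of full column rank `nᵢ`, `∑ nᵢ = n`.
If each `Bᵢ` is `(MᵢᵀMᵢ)^{-1/2}` (characterized as the positive definite matrix with
`Bᵢ (MᵢᵀMᵢ) Bᵢ = I`), then the block diagonal matrix `B = blkdiag(B₁,…,B_k)` minimizes
`ω((MC)ᵀ(MC))` over all block diagonal `C` (with invertible blocks of the given sizes). -/
theorem omega_optimal_block_diagonal_scaling (k m : ℕ) (sz : Fin k → ℕ)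
    (M : Matrix (Fin m) ((i : Fin k) × Fin (sz i)) ℝ)
    (hcard : Fintype.card ((i : Fin k) × Fin (sz i)) ≤ m)
    (hrank : M.rank = Fintype.card ((i : Fin k) × Fin (sz i)))
    (B : ∀ i : Fin k, Matrix (Fin (sz i)) (Fin (sz i)) ℝ)
    (hB : ∀ i, (B i).PosDef ∧
      B i * ((Matrix.of fun r c => M r ⟨i, c⟩)ᵀ * (Matrix.of fun r c => M r ⟨i, c⟩)) *
        B i = 1) :
    let N : ℕ := Fintype.card ((i : Fin k) × Fin (sz i))
    let omega : Matrix ((i : Fin k) × Fin (sz i)) ((i : Fin k) × Fin (sz i)) ℝ → ℝ :=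
      fun S => (S.trace / N) / S.det ^ ((1 : ℝ) / N)
    ∀ C : ∀ i : Fin k, Matrix (Fin (sz i)) (Fin (sz i)) ℝ,
      (∀ i, IsUnit (C i).det) →
      omega ((M * Matrix.blockDiagonal' B)ᵀ * (M * Matrix.blockDiagonal' B)) ≤
        omega ((M * Matrix.blockDiagonal' C)ᵀ * (M * Matrix.blockDiagonal' C)) :=
  omega_optimal_block_diagonal_scaling_general k m sz M B hB
end

section
/- Let A ∈ S^n_{++} with simple largest and smallest eigenvalues λ₁ > λ₂ ≥ ⋯ ≥ λ_{n−1} > λ_n > 0 and corresponding orthonormal eigenvectors x₁, x_n. Suppose there exists nonzero w ∈ ℝ^n with Diag(w)x₁ = 0 and Diag(w)x_n = 0 (i.e., w ∘ x₁ = w ∘ x_n = 0). Then there exists ε > 0 such that for all |t| ≤ ε, κ((I + t·Diag(w)) A (I + t·Diag(w))) = κ(A). -/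
/-!
Write `P = I + t Diag(w) = Diag(1 + t w)`. Since `w ∘ x₁ = w ∘ xₙ = 0`, `P` fixes `x₁` and `xₙ`,
so they remain eigenvectors of the symmetric matrix `P A P` with eigenvalues `λ₁` and `λₙ`. An
eigenvector `v` of `P A P` for an eigenvalue `μ ≠ λ₁` is orthogonal to `x₁`, hence so is `P v`. As
`λ₁` is simple, the quadratic form of `A` on `x₁^⊥` is bounded by `c ‖·‖²` for some `c < λ₁`, so
`μ ‖v‖² = (P v)ᵀ A (P v) ≤ c ‖P v‖² ≤ c maxᵢ (1 + t wᵢ)² ‖v‖² ≤ λ₁ ‖v‖²` once `|t|` is small.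
Symmetrically `λₙ` stays the smallest eigenvalue.
-/

open Matrix Filter Topology

lemma exists_lt_forall_le_of_forall_lt {ι : Type*} [Finite ι] {f : ι → ℝ} {p : ι → Prop} {b : ℝ}
    (h : ∀ j, p j → f j < b) : ∃ c < b, ∀ j, p j → f j ≤ c := by
  have hev : ∀ᶠ c in 𝓝[<] b, ∀ j, p j → f j ≤ c :=
    eventually_all.2 fun j => eventually_imp_distrib_left.2 fun hj =>
      ((eventually_gt_nhds (h j hj)).filter_mono nhdsWithin_le_nhds).mono fun _ => le_of_lt
  exact (hev.and self_mem_nhdsWithin).exists.imp fun c hc => ⟨hc.2, hc.1⟩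

lemma exists_gt_forall_le_of_forall_lt {ι : Type*} [Finite ι] {f : ι → ℝ} {p : ι → Prop} {b : ℝ}
    (h : ∀ j, p j → b < f j) : ∃ c > b, ∀ j, p j → c ≤ f j := by
  obtain ⟨c, hc, hle⟩ := exists_lt_forall_le_of_forall_lt (f := -f) fun j hj => neg_lt_neg (h j hj)
  exact ⟨-c, lt_neg_of_lt_neg hc, fun j hj => neg_le.1 (hle j hj)⟩

lemma Matrix.mem_spectrum_iff_exists_mulVec_eq_smul {ι K : Type*} [Fintype ι] [DecidableEq ι]
    [Field K] {B : Matrix ι ι K} {μ : K} : μ ∈ spectrum K B ↔ ∃ v ≠ 0, B *ᵥ v = μ • v := by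
  rw [← spectrum_toLin', ← Module.End.hasEigenvalue_iff_mem_spectrum]
  refine ⟨fun h => ?_, fun ⟨v, hv0, hv⟩ => ?_⟩
  · obtain ⟨v, hv⟩ := h.exists_hasEigenvector
    exact ⟨v, hv.2, by simpa using hv.apply_eq_smul⟩
  · exact Module.End.hasEigenvalue_of_hasEigenvector
      ⟨Module.End.mem_eigenspace_iff.2 (by simpa using hv), hv0⟩

namespace Matrix.IsHermitian

section Orthogonality

variable {ι : Type*} [Fintype ι] {B : Matrix ι ι ℝ}

lemma mulVec_dotProduct (hB : B.IsHermitian) (x y : ι → ℝ) :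
    (B *ᵥ x) ⬝ᵥ y = x ⬝ᵥ (B *ᵥ y) := by
  rw [dotProduct_mulVec, ← mulVec_transpose, ← conjTranspose_eq_transpose_of_trivial, hB.eq]

lemma dotProduct_eq_zero_of_mulVec_eq_smul (hB : B.IsHermitian) {x y : ι → ℝ} {a b : ℝ}
    (hx : B *ᵥ x = a • x) (hy : B *ᵥ y = b • y) (hab : a ≠ b) : x ⬝ᵥ y = 0 := by
  have h := hB.mulVec_dotProduct x y
  rw [hx, hy, smul_dotProduct, dotProduct_smul, smul_eq_mul, smul_eq_mul] at h
  exact (mul_eq_zero.1 (by linear_combination h : (a - b) * (x ⬝ᵥ y) = 0)).resolve_left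
    (sub_ne_zero.2 hab)

variable [DecidableEq ι]

lemma csSup_spectrum_eq_of_forall_orthogonal (hB : B.IsHermitian) {x : ι → ℝ} {lam : ℝ}
    (hx0 : x ≠ 0) (hx : B *ᵥ x = lam • x)
    (hle : ∀ v, x ⬝ᵥ v = 0 → v ⬝ᵥ (B *ᵥ v) ≤ lam * (v ⬝ᵥ v)) :
    sSup (spectrum ℝ B) = lam := by
  refine IsGreatest.csSup_eq ⟨mem_spectrum_iff_exists_mulVec_eq_smul.2 ⟨x, hx0, hx⟩, ?_⟩
  intro μ hμ
  obtain ⟨v, hv0, hv⟩ := mem_spectrum_iff_exists_mulVec_eq_smul.1 hμ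
  rcases eq_or_ne μ lam with rfl | hne
  · rfl
  have hvv : 0 < v ⬝ᵥ v := lt_of_le_of_ne (Finset.sum_nonneg fun i _ => mul_self_nonneg (v i))
    (Ne.symm (dotProduct_self_eq_zero.not.2 hv0))
  have h := hle v (hB.dotProduct_eq_zero_of_mulVec_eq_smul hx hv hne.symm)
  rw [hv, dotProduct_smul, smul_eq_mul] at h
  exact le_of_mul_le_mul_right h hvv

end Orthogonality

section EigenCoords

variable {ι : Type*} [Fintype ι] [DecidableEq ι] {A : Matrix ι ι ℝ} (hA : A.IsHermitian)

lemma eigenvectorUnitary_mul_transpose :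
    (hA.eigenvectorUnitary : Matrix ι ι ℝ) * (hA.eigenvectorUnitary : Matrix ι ι ℝ)ᵀ = 1 := by
  simpa [star_eq_conjTranspose] using Unitary.coe_mul_star_self hA.eigenvectorUnitary

lemma transpose_eigenvectorUnitary_mul :
    (hA.eigenvectorUnitary : Matrix ι ι ℝ)ᵀ * (hA.eigenvectorUnitary : Matrix ι ι ℝ) = 1 := by
  simpa [star_eq_conjTranspose] using Unitary.coe_star_mul_self hA.eigenvectorUnitary

lemma transpose_eigenvectorUnitary_mul_self :
    (hA.eigenvectorUnitary : Matrix ι ι ℝ)ᵀ * A =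
      diagonal hA.eigenvalues * (hA.eigenvectorUnitary : Matrix ι ι ℝ)ᵀ := by
  have h : A = hA.eigenvectorUnitary * diagonal hA.eigenvalues *
      (hA.eigenvectorUnitary : Matrix ι ι ℝ)ᵀ := by
    conv_lhs => rw [hA.spectral_theorem]
    simp [star_eq_conjTranspose]
  calc _ = (hA.eigenvectorUnitary : Matrix ι ι ℝ)ᵀ * (hA.eigenvectorUnitary *
        diagonal hA.eigenvalues * (hA.eigenvectorUnitary : Matrix ι ι ℝ)ᵀ) := congrArg _ h
    _ = _ := by rw [← Matrix.mul_assoc, ← Matrix.mul_assoc, hA.transpose_eigenvectorUnitary_mul,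
        Matrix.one_mul]

noncomputable def eigenCoords (u : ι → ℝ) : ι → ℝ :=
  (hA.eigenvectorUnitary : Matrix ι ι ℝ)ᵀ *ᵥ u

lemma eigenCoords_dotProduct (u v : ι → ℝ) :
    hA.eigenCoords u ⬝ᵥ hA.eigenCoords v = u ⬝ᵥ v := by
  rw [eigenCoords, eigenCoords, dotProduct_mulVec, ← mulVec_transpose, transpose_transpose,
    mulVec_mulVec, eigenvectorUnitary_mul_transpose, one_mulVec]

lemma eigenCoords_mulVec (u : ι → ℝ) (j : ι) :
    hA.eigenCoords (A *ᵥ u) j = hA.eigenvalues j * hA.eigenCoords u j := by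
  rw [eigenCoords, eigenCoords, mulVec_mulVec, transpose_eigenvectorUnitary_mul_self,
    ← mulVec_mulVec, mulVec_diagonal]

lemma dotProduct_self_eq_sum_eigenCoords (u : ι → ℝ) :
    u ⬝ᵥ u = ∑ j, hA.eigenCoords u j ^ 2 := by
  rw [← eigenCoords_dotProduct hA, dotProduct]
  simp only [sq]

lemma dotProduct_mulVec_eq_sum_eigenCoords (u : ι → ℝ) :
    u ⬝ᵥ (A *ᵥ u) = ∑ j, hA.eigenvalues j * hA.eigenCoords u j ^ 2 := by
  rw [← eigenCoords_dotProduct hA, dotProduct]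
  exact Finset.sum_congr rfl fun j _ => by rw [eigenCoords_mulVec hA]; ring

lemma subsingleton_eigenvalues_eq {lam : ℝ} (h : A.charpoly.rootMultiplicity lam ≤ 1) :
    {j | hA.eigenvalues j = lam}.Subsingleton := by
  rw [← Polynomial.count_roots, hA.roots_charpoly_eq_eigenvalues, RCLike.ofReal_real_eq_id,
    Function.id_comp, Multiset.count_map] at h
  replace h : (Finset.univ.filter fun j => lam = hA.eigenvalues j).card ≤ 1 := h
  intro i hi j hj
  exact Finset.card_le_one.1 h i (by simpa [eq_comm] using hi) j (by simpa [eq_comm] using hj)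

lemma eigenCoords_eq_zero_of_orthogonal {x u : ι → ℝ} {lam : ℝ} (hx0 : x ≠ 0)
    (hx : A *ᵥ x = lam • x) (hsimple : A.charpoly.rootMultiplicity lam ≤ 1) (hu : x ⬝ᵥ u = 0)
    {j : ι} (hj : hA.eigenvalues j = lam) : hA.eigenCoords u j = 0 := by
  have hx_off : ∀ i ≠ j, hA.eigenCoords x i = 0 := by
    intro i hij
    have hi : hA.eigenvalues i ≠ lam := fun hi => hij (hA.subsingleton_eigenvalues_eq hsimple hi hj)
    have h := hA.eigenCoords_mulVec x i
    rw [hx, eigenCoords, mulVec_smul, ← eigenCoords, Pi.smul_apply, smul_eq_mul] at h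
    exact (mul_eq_zero.1 (by linear_combination -h : (hA.eigenvalues i - lam) *
      hA.eigenCoords x i = 0)).resolve_left (sub_ne_zero.2 hi)
  have hxj : hA.eigenCoords x j ≠ 0 := by
    intro hxj
    refine hx0 (dotProduct_self_eq_zero.1 ?_)
    rw [← hA.eigenCoords_dotProduct, dotProduct_self_eq_zero]
    funext i
    rcases eq_or_ne i j with rfl | hij
    exacts [hxj, hx_off i hij]
  rw [← hA.eigenCoords_dotProduct, dotProduct,
    Finset.sum_eq_single j (fun i _ hij => by rw [hx_off i hij, zero_mul]) (by simp)] at hu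
  exact (mul_eq_zero.1 hu).resolve_left hxj

lemma exists_lt_forall_orthogonal_dotProduct_mulVec_le {x : ι → ℝ} {lam : ℝ} (hx0 : x ≠ 0)
    (hx : A *ᵥ x = lam • x) (hsimple : A.charpoly.rootMultiplicity lam ≤ 1)
    (hmax : ∀ j, hA.eigenvalues j ≤ lam) :
    ∃ c < lam, ∀ u, x ⬝ᵥ u = 0 → u ⬝ᵥ (A *ᵥ u) ≤ c * (u ⬝ᵥ u) := by
  obtain ⟨c, hc, hle⟩ := exists_lt_forall_le_of_forall_lt
    (p := fun j => hA.eigenvalues j ≠ lam) fun j hj => lt_of_le_of_ne (hmax j) hj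
  refine ⟨c, hc, fun u hu => ?_⟩
  rw [hA.dotProduct_mulVec_eq_sum_eigenCoords, hA.dotProduct_self_eq_sum_eigenCoords,
    Finset.mul_sum]
  refine Finset.sum_le_sum fun j _ => ?_
  by_cases hj : hA.eigenvalues j = lam
  · simp [hA.eigenCoords_eq_zero_of_orthogonal hx0 hx hsimple hu hj]
  · exact mul_le_mul_of_nonneg_right (hle j hj) (sq_nonneg _)

lemma exists_gt_forall_orthogonal_le_dotProduct_mulVec {x : ι → ℝ} {lam : ℝ} (hx0 : x ≠ 0)
    (hx : A *ᵥ x = lam • x) (hsimple : A.charpoly.rootMultiplicity lam ≤ 1)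
    (hmin : ∀ j, lam ≤ hA.eigenvalues j) :
    ∃ c > lam, ∀ u, x ⬝ᵥ u = 0 → c * (u ⬝ᵥ u) ≤ u ⬝ᵥ (A *ᵥ u) := by
  obtain ⟨c, hc, hle⟩ := exists_gt_forall_le_of_forall_lt
    (p := fun j => hA.eigenvalues j ≠ lam) fun j hj => lt_of_le_of_ne (hmin j) (Ne.symm hj)
  refine ⟨c, hc, fun u hu => ?_⟩
  rw [hA.dotProduct_mulVec_eq_sum_eigenCoords, hA.dotProduct_self_eq_sum_eigenCoords,
    Finset.mul_sum]
  refine Finset.sum_le_sum fun j _ => ?_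
  by_cases hj : hA.eigenvalues j = lam
  · simp [hA.eigenCoords_eq_zero_of_orthogonal hx0 hx hsimple hu hj]
  · exact mul_le_mul_of_nonneg_right (hle j hj) (sq_nonneg _)

end EigenCoords

section DiagonalScaling

variable {ι : Type*} [Fintype ι] [DecidableEq ι] {A : Matrix ι ι ℝ}

lemma csSup_spectrum_diagonal_mul_mul_diagonal (hA : A.IsHermitian) {d x : ι → ℝ} {lam c : ℝ}
    (hx0 : x ≠ 0) (hx : A *ᵥ x = lam • x) (hdx : ∀ i, d i * x i = x i)
    (hgap : ∀ u, x ⬝ᵥ u = 0 → u ⬝ᵥ (A *ᵥ u) ≤ c * (u ⬝ᵥ u)) (hd : ∀ i, c * d i ^ 2 ≤ lam) :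
    sSup (spectrum ℝ (diagonal d * A * diagonal d)) = lam := by
  have hD : (diagonal d).IsHermitian := isHermitian_diagonal d
  have hDx : diagonal d *ᵥ x = x := funext fun i => by rw [mulVec_diagonal, hdx]
  have hB : (diagonal d * A * diagonal d).IsHermitian := by
    simpa [hD.eq] using isHermitian_conjTranspose_mul_mul (diagonal d) hA
  refine hB.csSup_spectrum_eq_of_forall_orthogonal hx0 ?_ fun v hv => ?_
  · rw [← mulVec_mulVec, ← mulVec_mulVec, hDx, hx, mulVec_smul, hDx]
  have hDv : x ⬝ᵥ (diagonal d *ᵥ v) = 0 := by rw [← hD.mulVec_dotProduct, hDx, hv]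
  calc v ⬝ᵥ ((diagonal d * A * diagonal d) *ᵥ v)
      = (diagonal d *ᵥ v) ⬝ᵥ (A *ᵥ (diagonal d *ᵥ v)) := by
        rw [← mulVec_mulVec, ← mulVec_mulVec, ← hD.mulVec_dotProduct]
    _ ≤ c * ((diagonal d *ᵥ v) ⬝ᵥ (diagonal d *ᵥ v)) := hgap _ hDv
    _ = ∑ i, c * d i ^ 2 * (v i * v i) := by
        simp only [mulVec_diagonal, dotProduct, Finset.mul_sum]
        exact Finset.sum_congr rfl fun i _ => by ring
    _ ≤ ∑ i, lam * (v i * v i) :=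
        Finset.sum_le_sum fun i _ => mul_le_mul_of_nonneg_right (hd i) (mul_self_nonneg _)
    _ = lam * (v ⬝ᵥ v) := by rw [dotProduct, Finset.mul_sum]

lemma csInf_spectrum_diagonal_mul_mul_diagonal (hA : A.IsHermitian) {d x : ι → ℝ} {lam c : ℝ}
    (hx0 : x ≠ 0) (hx : A *ᵥ x = lam • x) (hdx : ∀ i, d i * x i = x i)
    (hgap : ∀ u, x ⬝ᵥ u = 0 → c * (u ⬝ᵥ u) ≤ u ⬝ᵥ (A *ᵥ u)) (hd : ∀ i, lam ≤ c * d i ^ 2) :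
    sInf (spectrum ℝ (diagonal d * A * diagonal d)) = lam := by
  have h := hA.neg.csSup_spectrum_diagonal_mul_mul_diagonal (c := -c) hx0
    (by rw [neg_mulVec, hx, neg_smul]) hdx
    (fun u hu => by rw [neg_mulVec, dotProduct_neg]; linarith [hgap u hu])
    (fun i => by linarith [hd i])
  rw [Matrix.mul_neg, Matrix.neg_mul, ← spectrum.neg_eq, Real.sSup_neg] at h
  linarith

end DiagonalScaling

end Matrix.IsHermitian

lemma tendsto_mul_one_add_mul_sq (c a : ℝ) :
    Tendsto (fun t : ℝ => c * (1 + t * a) ^ 2) (𝓝 0) (𝓝 c) :=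
  (by fun_prop : Continuous fun t : ℝ => c * (1 + t * a) ^ 2).tendsto' 0 c (by simp)

theorem kappa_invariant_under_perturbation_general (n : ℕ)
    (A : Matrix (Fin n) (Fin n) ℝ) (hA : A.PosDef)
    (lam1 lamn : ℝ) (x1 xn : Fin n → ℝ)
    (hlam1 : lam1 = sSup (spectrum ℝ A)) (hlamn : lamn = sInf (spectrum ℝ A))
    (hx1unit : ∑ i, x1 i * x1 i = 1) (hxnunit : ∑ i, xn i * xn i = 1)
    (heig1 : A.mulVec x1 = lam1 • x1) (heign : A.mulVec xn = lamn • xn)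
    (hsimple1 : A.charpoly.rootMultiplicity lam1 = 1)
    (hsimplen : A.charpoly.rootMultiplicity lamn = 1)
    (w : Fin n → ℝ)
    (hwx1 : ∀ i, w i * x1 i = 0) (hwxn : ∀ i, w i * xn i = 0) :
    ∃ ε > (0 : ℝ), ∀ t : ℝ, |t| ≤ ε →
      sSup (spectrum ℝ ((1 + t • Matrix.diagonal w) * A * (1 + t • Matrix.diagonal w))) /
        sInf (spectrum ℝ ((1 + t • Matrix.diagonal w) * A * (1 + t • Matrix.diagonal w)))
      = sSup (spectrum ℝ A) / sInf (spectrum ℝ A) := by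
  have hH := hA.isHermitian
  have hx1 : x1 ≠ 0 := by rintro rfl; simp at hx1unit
  have hxn : xn ≠ 0 := by rintro rfl; simp at hxnunit
  have hfin : (spectrum ℝ A).Finite := finite_real_spectrum
  obtain ⟨c1, hc1, hgap1⟩ := hH.exists_lt_forall_orthogonal_dotProduct_mulVec_le hx1 heig1
    hsimple1.le fun j => hlam1 ▸ le_csSup hfin.bddAbove (hH.eigenvalues_mem_spectrum_real j)
  obtain ⟨cn, hcn, hgapn⟩ := hH.exists_gt_forall_orthogonal_le_dotProduct_mulVec hxn heign
    hsimplen.le fun j => hlamn ▸ csInf_le hfin.bddBelow (hH.eigenvalues_mem_spectrum_real j)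
  have hsmall : ∀ᶠ t in 𝓝 (0 : ℝ), ∀ i,
      c1 * (1 + t * w i) ^ 2 ≤ lam1 ∧ lamn ≤ cn * (1 + t * w i) ^ 2 :=
    eventually_all.2 fun i => ((tendsto_mul_one_add_mul_sq c1 (w i)).eventually
      (eventually_le_nhds hc1)).and
        ((tendsto_mul_one_add_mul_sq cn (w i)).eventually (eventually_ge_nhds hcn))
  obtain ⟨ε, hε, hball⟩ := Metric.nhds_basis_closedBall.eventually_iff.1 hsmall
  refine ⟨ε, hε, fun t ht => ?_⟩
  have hbound := hball (by simpa [Real.dist_eq] using ht)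
  have hP : 1 + t • diagonal w = diagonal fun i => 1 + t * w i := by
    rw [← diagonal_one, ← diagonal_smul, diagonal_add]; rfl
  rw [hP, ← hlam1, ← hlamn,
    hH.csSup_spectrum_diagonal_mul_mul_diagonal hx1 heig1
      (fun i => by linear_combination t * hwx1 i) hgap1 fun i => (hbound i).1,
    hH.csInf_spectrum_diagonal_mul_mul_diagonal hxn heign
      (fun i => by linear_combination t * hwxn i) hgapn fun i => (hbound i).2]

/-- Nonuniqueness of `κ`-optimal diagonal scaling.  Let `A ≻ 0` with simple largest and
smallest eigenvalues `λ₁ = λ_max(A)`, `λ_n = λ_min(A)` and orthonormal eigenvectors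
`x₁, x_n`.  If `w ≠ 0` satisfies `w ∘ x₁ = w ∘ x_n = 0`, then there is `ε > 0` such that
`κ((I + t Diag(w)) A (I + t Diag(w))) = κ(A)` for all `|t| ≤ ε`. -/
theorem kappa_invariant_under_perturbation (n : ℕ)
    (A : Matrix (Fin n) (Fin n) ℝ) (hA : A.PosDef)
    (lam1 lamn : ℝ) (x1 xn : Fin n → ℝ)
    (hlam1 : lam1 = sSup (spectrum ℝ A)) (hlamn : lamn = sInf (spectrum ℝ A))
    (hx1unit : ∑ i, x1 i * x1 i = 1) (hxnunit : ∑ i, xn i * xn i = 1)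
    (horth : ∑ i, x1 i * xn i = 0)
    (heig1 : A.mulVec x1 = lam1 • x1) (heign : A.mulVec xn = lamn • xn)
    (hsimple1 : A.charpoly.rootMultiplicity lam1 = 1)
    (hsimplen : A.charpoly.rootMultiplicity lamn = 1)
    (w : Fin n → ℝ) (hw : w ≠ 0)
    (hwx1 : ∀ i, w i * x1 i = 0) (hwxn : ∀ i, w i * xn i = 0) :
    ∃ ε > (0 : ℝ), ∀ t : ℝ, |t| ≤ ε →
      sSup (spectrum ℝ ((1 + t • Matrix.diagonal w) * A * (1 + t • Matrix.diagonal w))) /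
        sInf (spectrum ℝ ((1 + t • Matrix.diagonal w) * A * (1 + t • Matrix.diagonal w)))
      = sSup (spectrum ℝ A) / sInf (spectrum ℝ A) :=
  kappa_invariant_under_perturbation_general n A hA lam1 lamn x1 xn hlam1 hlamn hx1unit hxnunit
    heig1 heign hsimple1 hsimplen w hwx1 hwxn
end
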